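/- Let (T, A)_ω be a weighted knowledge base with T a DL-Lite_bool^H TBox, let k be an integer, and let I be an interpretation with ω(I) ≤ k. For every individual a ∈ Ind(A) and every (possibly inverse) role r, if ∃^{>k} r ∈ tp_A(a) (i.e., there are at least k+1 distinct individuals b with the assertion r(a,b) in A, reading r(a,b) as s(b,a) when r = s^-), then ∃s ∈ tp_I(a) for every role s with r ⊑_T s. -/

import Mathlib

namespace DL

/-! ### Syntax -/

abbrev IndName := ℕ
abbrev CName := ℕ
abbrev RName := ℕ

/-- Roles: role names and inverse roles. -/
inductive Role where
  | name : RName → Role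
  | inv  : RName → Role
deriving DecidableEq

/-- `ALCHIO` concepts. -/
inductive Concept where
  | top  : Concept
  | bot  : Concept
  | atom : CName → Concept
  | nom  : IndName → Concept
  | neg  : Concept → Concept
  | conj : Concept → Concept → Concept
  | ex   : Role → Concept → Concept
deriving DecidableEq

/-- TBox axioms: concept inclusions and role inclusions. -/
inductive Axiom where
  | ci : Concept → Concept → Axiom
  | ri : Role → Role → Axiom
deriving DecidableEq

/-- ABox assertions. -/
inductive Assertion where
  | ca : CName → IndName → Assertion
  | ra : RName → IndName → IndName → Assertion
deriving DecidableEq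

/-! ### Interpretations -/

/-- A DL interpretation with domain a subset of a universe `U`.  Individual names are
interpreted via `indI` (under the standard names assumption, the individual names of the
ABox under consideration are interpreted "as themselves", i.e. injectively). -/
structure Interp (U : Type) where
  dom : Set U
  indI : IndName → U
  cI : CName → Set U
  rI : RName → Set (U × U)
  cI_sub : ∀ A, cI A ⊆ dom
  rI_sub : ∀ r p, p ∈ rI r → p.1 ∈ dom ∧ p.2 ∈ dom

variable {U : Type}

/-- Every individual name denotes an element of the domain. -/
def Interp.Proper (I : Interp U) : Prop := ∀ a, I.indI a ∈ I.dom

def Role.interp (I : Interp U) : Role → Set (U × U)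
  | Role.name r => I.rI r
  | Role.inv r  => {p | (p.2, p.1) ∈ I.rI r}

def Concept.interp (I : Interp U) : Concept → Set U
  | Concept.top => I.dom
  | Concept.bot => ∅
  | Concept.atom A => I.cI A
  | Concept.nom a => {I.indI a} ∩ I.dom
  | Concept.neg C => I.dom \ Concept.interp I C
  | Concept.conj C D => Concept.interp I C ∩ Concept.interp I D
  | Concept.ex r C => {d | ∃ e, (d, e) ∈ Role.interp I r ∧ e ∈ Concept.interp I C}

def Assertion.sat (I : Interp U) : Assertion → Prop
  | Assertion.ca A a => I.indI a ∈ I.cI A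
  | Assertion.ra r a b => (I.indI a, I.indI b) ∈ I.rI r

/-! ### Violations and cost -/

/-- Violations of a concept inclusion `C ⊑ D`. -/
def vioCI (I : Interp U) (C D : Concept) : Set U :=
  Concept.interp I C \ Concept.interp I D

/-- Violations of a role inclusion `r ⊑ s`. -/
def vioRI (I : Interp U) (r s : Role) : Set (U × U) :=
  Role.interp I r \ Role.interp I s

/-- The number of violations of an axiom. -/
noncomputable def Axiom.vioCount (I : Interp U) : Axiom → ℕ∞
  | Axiom.ci C D => (vioCI I C D).encard
  | Axiom.ri r s => (vioRI I r s).encard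

open Classical in
/-- The cost of an interpretation w.r.t. a weighted knowledge base `(T, A)` with weight
functions `wT` (on TBox axioms) and `wA` (on ABox assertions). -/
noncomputable def cost (T : Finset Axiom) (A : Finset Assertion)
    (wT : Axiom → ℕ∞) (wA : Assertion → ℕ∞) (I : Interp U) : ℕ∞ :=
  (∑ τ ∈ T, wT τ * Axiom.vioCount I τ) +
    ∑ α ∈ A, (if Assertion.sat I α then 0 else wA α)

/-! ### Queries -/

inductive Term where
  | var : ℕ → Term
  | ind : IndName → Term
deriving DecidableEq

inductive QAtom where
  | ca : CName → Term → QAtom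
  | ra : RName → Term → Term → QAtom
deriving DecidableEq

/-- A Boolean conjunctive query: a finite set of atoms, all of whose variables are
(implicitly) existentially quantified. -/
abbrev BCQ := Finset QAtom

def Term.eval (I : Interp U) (π : ℕ → U) : Term → U
  | Term.var v => π v
  | Term.ind a => I.indI a

def QAtom.sat (I : Interp U) (π : ℕ → U) : QAtom → Prop
  | QAtom.ca A t => Term.eval I π t ∈ I.cI A
  | QAtom.ra r t t' => (Term.eval I π t, Term.eval I π t') ∈ I.rI r

/-- Satisfaction of a BCQ in an interpretation. -/
def satQ (I : Interp U) (q : BCQ) : Prop :=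
  ∃ π : ℕ → U, (∀ v, π v ∈ I.dom) ∧ ∀ a ∈ q, QAtom.sat I π a

/-- An instance query is a BCQ with a single atom. -/
def IsIQ (q : BCQ) : Prop := ∃ a : QAtom, q = {a}

/-! ### Cost-based semantics -/

/-- `k`-satisfiability: some interpretation has cost at most `k`. -/
def ksat (T : Finset Axiom) (A : Finset Assertion)
    (wT : Axiom → ℕ∞) (wA : Assertion → ℕ∞) (k : ℕ) : Prop :=
  ∃ (U : Type) (I : Interp U), I.Proper ∧ cost T A wT wA I ≤ (k : ℕ∞)

/-- `K ⊨ₚᵏ q`: some interpretation of cost at most `k` satisfies `q`. -/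
def satP (T : Finset Axiom) (A : Finset Assertion)
    (wT : Axiom → ℕ∞) (wA : Assertion → ℕ∞) (k : ℕ) (q : BCQ) : Prop :=
  ∃ (U : Type) (I : Interp U), I.Proper ∧ cost T A wT wA I ≤ (k : ℕ∞) ∧ satQ I q

/-- `K ⊨꜀ᵏ q`: every interpretation of cost at most `k` satisfies `q`. -/
def satC (T : Finset Axiom) (A : Finset Assertion)
    (wT : Axiom → ℕ∞) (wA : Assertion → ℕ∞) (k : ℕ) (q : BCQ) : Prop :=
  ∀ (U : Type) (I : Interp U), I.Proper → cost T A wT wA I ≤ (k : ℕ∞) → satQ I q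

/-- The optimal cost of a weighted knowledge base. -/
noncomputable def optCost (T : Finset Axiom) (A : Finset Assertion)
    (wT : Axiom → ℕ∞) (wA : Assertion → ℕ∞) : ℕ∞ :=
  sInf {c : ℕ∞ | ∃ (U : Type) (I : Interp U), I.Proper ∧ cost T A wT wA I = c}

/-- `K ⊨ₚᵒᵖᵗ q`: some interpretation of optimal cost satisfies `q`. -/
noncomputable def satPopt (T : Finset Axiom) (A : Finset Assertion)
    (wT : Axiom → ℕ∞) (wA : Assertion → ℕ∞) (q : BCQ) : Prop :=
  ∃ (U : Type) (I : Interp U), I.Proper ∧ cost T A wT wA I = optCost T A wT wA ∧ satQ I q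

/-- `K ⊨꜀ᵒᵖᵗ q`: every interpretation of optimal cost satisfies `q`. -/
noncomputable def satCopt (T : Finset Axiom) (A : Finset Assertion)
    (wT : Axiom → ℕ∞) (wA : Assertion → ℕ∞) (q : BCQ) : Prop :=
  ∀ (U : Type) (I : Interp U), I.Proper → cost T A wT wA I = optCost T A wT wA → satQ I q

/-! ### Occurrences of symbols -/

def Role.base : Role → RName
  | Role.name r => r
  | Role.inv r => r

def Concept.cnames : Concept → Finset CName
  | Concept.atom A => {A}
  | Concept.neg C => C.cnames
  | Concept.conj C D => C.cnames ∪ D.cnames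
  | Concept.ex _ C => C.cnames
  | _ => ∅

def Concept.rnames : Concept → Finset RName
  | Concept.neg C => C.rnames
  | Concept.conj C D => C.rnames ∪ D.rnames
  | Concept.ex r C => insert r.base C.rnames
  | _ => ∅

def Concept.indNames : Concept → Finset IndName
  | Concept.nom a => {a}
  | Concept.neg C => C.indNames
  | Concept.conj C D => C.indNames ∪ D.indNames
  | Concept.ex _ C => C.indNames
  | _ => ∅

def Axiom.cnames : Axiom → Finset CName
  | Axiom.ci C D => C.cnames ∪ D.cnames
  | Axiom.ri _ _ => ∅

def Axiom.rnames : Axiom → Finset RName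
  | Axiom.ci C D => C.rnames ∪ D.rnames
  | Axiom.ri r s => {r.base, s.base}

def Axiom.indNames : Axiom → Finset IndName
  | Axiom.ci C D => C.indNames ∪ D.indNames
  | Axiom.ri _ _ => ∅

def Assertion.cnames : Assertion → Finset CName
  | Assertion.ca A _ => {A}
  | Assertion.ra _ _ _ => ∅

def Assertion.rnames : Assertion → Finset RName
  | Assertion.ca _ _ => ∅
  | Assertion.ra r _ _ => {r}

def Assertion.indNames : Assertion → Finset IndName
  | Assertion.ca _ a => {a}
  | Assertion.ra _ a b => {a, b}

/-- The individual names occurring in an ABox. -/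
def aboxInds (A : Finset Assertion) : Finset IndName := A.biUnion Assertion.indNames

/-- The individual names occurring in a KB. -/
def kbInds (T : Finset Axiom) (A : Finset Assertion) : Finset IndName :=
  T.biUnion Axiom.indNames ∪ aboxInds A

def Term.indNames : Term → Finset IndName
  | Term.var _ => ∅
  | Term.ind a => {a}

def QAtom.indNames : QAtom → Finset IndName
  | QAtom.ca _ t => t.indNames
  | QAtom.ra _ t t' => t.indNames ∪ t'.indNames

def QAtom.cnames : QAtom → Finset CName
  | QAtom.ca A _ => {A}
  | QAtom.ra _ _ _ => ∅

def qInds (q : BCQ) : Finset IndName := q.biUnion QAtom.indNames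

def qCnames (q : BCQ) : Finset CName := q.biUnion QAtom.cnames

/-! ### Sizes -/

def Concept.size : Concept → ℕ
  | Concept.top => 1
  | Concept.bot => 1
  | Concept.atom _ => 1
  | Concept.nom _ => 1
  | Concept.neg C => C.size + 1
  | Concept.conj C D => C.size + D.size + 1
  | Concept.ex _ C => C.size + 2

def Axiom.size : Axiom → ℕ
  | Axiom.ci C D => C.size + D.size + 1
  | Axiom.ri _ _ => 3

def Assertion.size : Assertion → ℕ
  | Assertion.ca _ _ => 2
  | Assertion.ra _ _ _ => 3

def tboxSize (T : Finset Axiom) : ℕ := ∑ τ ∈ T, τ.size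

def aboxSize (A : Finset Assertion) : ℕ := ∑ α ∈ A, α.size

/-! ### DL-Lite fragments -/

/-- Basic concepts: concept names and unqualified existential restrictions `∃r` (with a
possibly inverse role `r`), the latter rendered as `∃r.⊤`. -/
inductive IsBasic : Concept → Prop
  | atom (A : CName) : IsBasic (Concept.atom A)
  | ex (r : Role) : IsBasic (Concept.ex r Concept.top)

/-- A `DL-Lite_core` axiom: `B ⊑ C` or `B ⊓ C ⊑ ⊥` with `B, C` basic concepts. -/
def IsCoreAxiom (τ : Axiom) : Prop :=
  (∃ B C, τ = Axiom.ci B C ∧ IsBasic B ∧ IsBasic C) ∨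
  (∃ B C, τ = Axiom.ci (Concept.conj B C) Concept.bot ∧ IsBasic B ∧ IsBasic C)

def IsDLLiteCore (T : Finset Axiom) : Prop := ∀ τ ∈ T, IsCoreAxiom τ

/-- Concepts built from basic concepts using `¬`, `⊓` (and hence also `⊔`). -/
inductive IsBoolConcept : Concept → Prop
  | basic {C} : IsBasic C → IsBoolConcept C
  | neg {C} : IsBoolConcept C → IsBoolConcept (Concept.neg C)
  | conj {C D} : IsBoolConcept C → IsBoolConcept D → IsBoolConcept (Concept.conj C D)

/-- A `DL-Lite_bool^H` axiom: a concept inclusion between Boolean combinations of basic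
concepts, or a role inclusion. -/
def IsBoolHAxiom (τ : Axiom) : Prop :=
  (∃ C D, τ = Axiom.ci C D ∧ IsBoolConcept C ∧ IsBoolConcept D) ∨ (∃ r s, τ = Axiom.ri r s)

def IsDLLiteBoolH (T : Finset Axiom) : Prop := ∀ τ ∈ T, IsBoolHAxiom τ

/-- The role assertion `ρ(a,b)`, read as `s(b,a)` when `ρ = s⁻`. -/
def roleAssert : Role → IndName → IndName → Assertion
  | Role.name r, a, b => Assertion.ra r a b
  | Role.inv r, a, b => Assertion.ra r b a

/-- `A ⊨ ∃^{>k} ρ` at `a`: there are at least `k+1` distinct individuals `b` with the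
assertion `ρ(a,b)` in `A`. -/
def manyInA (A : Finset Assertion) (k : ℕ) (ρ : Role) (a : IndName) : Prop :=
  ∃ B : Finset IndName, k + 1 ≤ B.card ∧ ∀ b ∈ B, roleAssert ρ a b ∈ A

/-- `r ⊑_T s`: the reflexive-transitive closure of the role inclusions of `T`. -/
def subRole (T : Finset Axiom) : Role → Role → Prop :=
  Relation.ReflTransGen fun ρ σ => Axiom.ri ρ σ ∈ T

/-! Suppose `a ∉ (∃σ)^I` and let `b₀, …, b_k` be distinct `ρ`-successors of `a` in `A`.
For each `bᵢ`, either the assertion `ρ(a,bᵢ)` is violated, or `(a,bᵢ) ∈ ρ^I \ σ^I`, and then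
the pair violates some role inclusion along the chain `ρ ⊑ ⋯ ⊑ σ`.  Since the individuals are
interpreted injectively, these are `k+1` distinct violations, each of weight at least `1`,
so `ω(I) ≥ k+1`. -/

lemma roleAssert_injective (ρ : Role) (a : IndName) : Function.Injective (roleAssert ρ a) := by
  cases ρ <;> intro b b' h <;> simpa [roleAssert] using h

lemma mem_aboxInds_of_roleAssert_mem {A : Finset Assertion} {ρ : Role} {a b : IndName}
    (h : roleAssert ρ a b ∈ A) : b ∈ aboxInds A := by
  cases ρ <;> exact Finset.mem_biUnion.2 ⟨_, h, by simp [roleAssert, Assertion.indNames]⟩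

lemma sat_roleAssert_iff (I : Interp U) (ρ : Role) (a b : IndName) :
    (roleAssert ρ a b).sat I ↔ (I.indI a, I.indI b) ∈ ρ.interp I := by
  cases ρ <;> simp [roleAssert, Assertion.sat, Role.interp]

def Axiom.roleVio (I : Interp U) : Axiom → Set (U × U)
  | Axiom.ci _ _ => ∅
  | Axiom.ri r s => vioRI I r s

lemma Axiom.encard_roleVio_le (I : Interp U) (τ : Axiom) :
    (τ.roleVio I).encard ≤ τ.vioCount I := by
  cases τ <;> simp [roleVio, vioCount]

lemma encard_biUnion_roleVio_le {T : Finset Axiom} {wT : Axiom → ℕ∞}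
    (hwT : ∀ τ ∈ T, 1 ≤ wT τ) (I : Interp U) :
    (⋃ τ ∈ T, τ.roleVio I).encard ≤ ∑ τ ∈ T, wT τ * τ.vioCount I :=
  (T.set_encard_biUnion_le _).trans <| Finset.sum_le_sum fun τ hτ =>
    (τ.encard_roleVio_le I).trans (le_mul_of_one_le_left' (hwT τ hτ))

open Classical in
lemma encard_unsat_le_sum {A : Finset Assertion} {wA : Assertion → ℕ∞}
    (hwA : ∀ α ∈ A, 1 ≤ wA α) (I : Interp U) :
    {α ∈ (A : Set Assertion) | ¬ α.sat I}.encard ≤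
      ∑ α ∈ A, if α.sat I then 0 else wA α := by
  have hcoe : {α ∈ (A : Set Assertion) | ¬ α.sat I} = ↑(A.filter fun α => ¬ α.sat I) := by
    ext; simp
  rw [hcoe, Set.encard_coe_eq_coe_finsetCard, Finset.card_filter]
  push_cast
  refine Finset.sum_le_sum fun α hα => ?_
  split_ifs <;> simp_all

lemma subRole.mem_biUnion_roleVio {T : Finset Axiom} {ρ σ : Role} (h : subRole T ρ σ)
    {I : Interp U} {p : U × U} (hρ : p ∈ ρ.interp I) (hσ : p ∉ σ.interp I) :
    p ∈ ⋃ τ ∈ T, τ.roleVio I := by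
  induction h with
  | refl => exact absurd hρ hσ
  | @tail π _ _ hπσ ih =>
    by_cases hπ : p ∈ π.interp I
    · exact Set.mem_biUnion hπσ ⟨hπ, hσ⟩
    · exact ih hπ

lemma card_le_cost {T : Finset Axiom} {A : Finset Assertion} {wT : Axiom → ℕ∞}
    {wA : Assertion → ℕ∞} (hwT : ∀ τ ∈ T, 1 ≤ wT τ) (hwA : ∀ α ∈ A, 1 ≤ wA α)
    {I : Interp U} (hinj : Set.InjOn I.indI ↑(aboxInds A)) {a : IndName} {ρ σ : Role}
    (hsub : subRole T ρ σ) {B : Finset IndName} (hB : ∀ b ∈ B, roleAssert ρ a b ∈ A)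
    (hσ : ∀ b ∈ B, (I.indI a, I.indI b) ∉ σ.interp I) :
    (B.card : ℕ∞) ≤ cost T A wT wA I := by
  classical
  have hsplit : (B : Set IndName) ⊆
      {b ∈ (B : Set IndName) | (roleAssert ρ a b).sat I} ∪
        {b ∈ (B : Set IndName) | ¬ (roleAssert ρ a b).sat I} := by
    intro b hb
    by_cases h : (roleAssert ρ a b).sat I
    exacts [Or.inl ⟨hb, h⟩, Or.inr ⟨hb, h⟩]
  have hTBox : {b ∈ (B : Set IndName) | (roleAssert ρ a b).sat I}.encard ≤
      ∑ τ ∈ T, wT τ * τ.vioCount I := by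
    refine (Set.encard_le_encard_of_injOn (f := fun b => (I.indI a, I.indI b))
      (fun b hb => hsub.mem_biUnion_roleVio ((sat_roleAssert_iff I ρ a b).1 hb.2)
        (hσ b hb.1)) ?_).trans (encard_biUnion_roleVio_le hwT I)
    rintro b ⟨hb, -⟩ b' ⟨hb', -⟩ h
    exact hinj (mem_aboxInds_of_roleAssert_mem (hB b hb))
      (mem_aboxInds_of_roleAssert_mem (hB b' hb')) (congrArg Prod.snd h)
  have hABox : {b ∈ (B : Set IndName) | ¬ (roleAssert ρ a b).sat I}.encard ≤
      ∑ α ∈ A, if α.sat I then 0 else wA α :=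
    (Set.encard_le_encard_of_injOn (t := {α ∈ (A : Set Assertion) | ¬ α.sat I})
      (fun b hb => ⟨hB b hb.1, hb.2⟩) (roleAssert_injective ρ a).injOn).trans
      (encard_unsat_le_sum hwA I)
  calc (B.card : ℕ∞) = (B : Set IndName).encard := (Set.encard_coe_eq_coe_finsetCard B).symm
    _ ≤ _ := (Set.encard_le_encard hsplit).trans (Set.encard_union_le _ _)
    _ ≤ cost T A wT wA I := add_le_add hTBox hABox

theorem statement16_general (T : Finset Axiom)
    (A : Finset Assertion) (wT : Axiom → ℕ∞) (wA : Assertion → ℕ∞)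
    (hwT : ∀ τ ∈ T, 1 ≤ wT τ) (hwA : ∀ α ∈ A, 1 ≤ wA α)
    (k : ℕ) {U : Type} (I : Interp U) (hP : I.Proper)
    (hinj : Set.InjOn I.indI ↑(aboxInds A))
    (hcost : cost T A wT wA I ≤ (k : ℕ∞))
    (a : IndName) (ρ : Role) (hmany : manyInA A k ρ a)
    (σ : Role) (hsub : subRole T ρ σ) :
    I.indI a ∈ Concept.interp I (Concept.ex σ Concept.top) := by
  by_contra hgoal
  obtain ⟨B, hBcard, hB⟩ := hmany
  have hσ : ∀ b ∈ B, (I.indI a, I.indI b) ∉ σ.interp I := fun b _ hb => hgoal ⟨_, hb, hP b⟩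
  have hk : (B.card : ℕ∞) ≤ k := (card_le_cost hwT hwA hinj hsub hB hσ).trans hcost
  norm_cast at hk
  omega

/-- Let `(T, A)_ω` be a `DL-Lite_bool^H` WKB and `I` an
interpretation (interpreting the ABox individuals as themselves, i.e. injectively) with
`ω(I) ≤ k`.  For every individual `a` and role `r`: if `∃^{>k} r ∈ tp_A(a)`, then
`∃s ∈ tp_I(a)` for every role `s` with `r ⊑_T s`. -/
theorem statement16 (T : Finset Axiom) (hT : IsDLLiteBoolH T)
    (A : Finset Assertion) (wT : Axiom → ℕ∞) (wA : Assertion → ℕ∞)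
    (hwT : ∀ τ ∈ T, 1 ≤ wT τ) (hwA : ∀ α ∈ A, 1 ≤ wA α)
    (k : ℕ) {U : Type} (I : Interp U) (hP : I.Proper)
    (hinj : Set.InjOn I.indI ↑(aboxInds A))
    (hcost : cost T A wT wA I ≤ (k : ℕ∞))
    (a : IndName) (ρ : Role) (hmany : manyInA A k ρ a)
    (σ : Role) (hsub : subRole T ρ σ) :
    I.indI a ∈ Concept.interp I (Concept.ex σ Concept.top) :=
  statement16_general T A wT wA hwT hwA k I hP hinj hcost a ρ hmany σ hsub

end DL
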